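/- Let W = ⟨L, t | [t,a] = d(a) for a ∈ A⟩ be an HNN-extension of Lie algebras over a field k, where A ≤ L is a subalgebra and d : A → L is a derivation. Then there is a short exact sequence of right U(W)-modules 0 → k ⊗_{U(A)} U(W) → k ⊗_{U(L)} U(W) → k → 0, where the first map sends 1⊗λ to 1⊗tλ and the second is induced by the augmentation. -/

import Mathlib

universe u

open FreeLieAlgebra UniversalEnvelopingAlgebra

attribute [local instance 100] LieRing.ofAssociativeRing

variable (k : Type u) [Field k] (L : Type u) [LieRing L] [LieAlgebra k L]
variable (A : LieSubalgebra k L) (d : A →ₗ[k] L)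

/-- The generators of the presentation of the HNN-extension
`W = ⟨L, t | [t,a] = d(a), a ∈ A⟩`: one generator for each element of `L`. -/
noncomputable def hnnGen (x : L) : FreeLieAlgebra k (L ⊕ Unit) := of k (Sum.inl x)

/-- The generator corresponding to the stable letter `t`. -/
noncomputable def hnnTGen : FreeLieAlgebra k (L ⊕ Unit) := of k (Sum.inr ())

noncomputable def hnnRel : Set (FreeLieAlgebra k (L ⊕ Unit)) :=
  {y | ∃ (c : k) (x₁ x₂ : L),
      y = hnnGen k L (c • x₁ + x₂) - c • hnnGen k L x₁ - hnnGen k L x₂} ∪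
  {y | ∃ x₁ x₂ : L, y = hnnGen k L ⁅x₁, x₂⁆ - ⁅hnnGen k L x₁, hnnGen k L x₂⁆} ∪
  {y | ∃ a : A, y = ⁅hnnTGen k L, hnnGen k L (a : L)⁆ - hnnGen k L (d a)}

/-- The HNN-extension `W = ⟨L, t | [t,a] = d(a) for a ∈ A⟩` of Lie algebras. -/
noncomputable def HNN : Type u :=
  FreeLieAlgebra k (L ⊕ Unit) ⧸ LieSubmodule.lieSpan k (FreeLieAlgebra k (L ⊕ Unit)) (hnnRel k L A d)

noncomputable instance : LieRing (HNN k L A d) := by unfold HNN; infer_instance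
noncomputable instance : LieAlgebra k (HNN k L A d) := by unfold HNN; infer_instance

/-- The canonical (Lie-algebra) map `L → W`. -/
noncomputable def hnnOf (x : L) : HNN k L A d :=
  LieSubmodule.Quotient.mk' _ (of k (Sum.inl x))

/-- The stable letter `t ∈ W`. -/
noncomputable def hnnT : HNN k L A d :=
  LieSubmodule.Quotient.mk' _ (of k (Sum.inr ()))

/-- `k ⊗_{U(A)} U(W)`, realised (in the mirror left-module convention) as the quotient of
`U(W)` by the submodule generated by the image of `A`. -/
noncomputable def NA : Submodule (UniversalEnvelopingAlgebra k (HNN k L A d))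
    (UniversalEnvelopingAlgebra k (HNN k L A d)) :=
  Submodule.span _ {u | ∃ a : A, u = ι k (hnnOf k L A d (a : L))}

/-- `k ⊗_{U(L)} U(W)`, realised as the quotient of `U(W)` by the submodule generated by the
image of `L`. -/
noncomputable def NL : Submodule (UniversalEnvelopingAlgebra k (HNN k L A d))
    (UniversalEnvelopingAlgebra k (HNN k L A d)) :=
  Submodule.span _ {u | ∃ x : L, u = ι k (hnnOf k L A d x)}


/-!
The augmentation ideal of `U(W)` is the left ideal generated by the Lie generators `L ∪ {t}` of
`W`; this gives exactness at `k ⊗_{U(L)} U(W)`. Right multiplication by `t` is well defined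
because `a t = t a - d(a)` for `a ∈ A`.

For injectivity, let `M` be a `U(W)`-module and `v ∈ M` a vector killed by `A`. Then `W` acts on
`M × k` with `L` acting through `M` (and trivially on `k`) and `t` acting as `t ⊕ 0` plus the
map `(m, c) ↦ (c • v, 0)`; the relations `[t, a] = d(a)` survive because `A` kills `v`. In this
representation `u t` sends `(0, 1)` to `(u • v, 0)`, while every element of `U(W) L` kills
`(0, 1)`. So `u t ∈ U(W) L` forces `u • v = 0`; for `v = 1 ∈ U(W) / U(W) A` this says
`u ∈ U(W) A`.
-/

theorem FreeLieAlgebra.lieSpan_range_of (R X : Type*) [CommRing R] :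
    LieSubalgebra.lieSpan R (FreeLieAlgebra R X) (Set.range (of R)) = ⊤ := by
  set S := LieSubalgebra.lieSpan R (FreeLieAlgebra R X) (Set.range (of R))
  have hid : S.incl.comp
      (FreeLieAlgebra.lift R fun x ↦ ⟨of R x, LieSubalgebra.subset_lieSpan ⟨x, rfl⟩⟩) =
      LieHom.id (R := R) :=
    FreeLieAlgebra.hom_ext fun x ↦ by simp
  refine eq_top_iff.mpr fun z _ ↦ ?_
  rw [← LieHom.id_apply (R := R) z, ← hid]
  exact Subtype.property _

theorem LieSubalgebra.lieSpan_image_eq_top {R L L' : Type*} [CommRing R] [LieRing L]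
    [LieAlgebra R L] [LieRing L'] [LieAlgebra R L'] {f : L →ₗ⁅R⁆ L'} (hf : Function.Surjective f)
    {s : Set L} (hs : lieSpan R L s = ⊤) : lieSpan R L' (f '' s) = ⊤ := by
  rw [← map_lieSpan, hs, ← LieSubalgebra.map_top, f.range_eq_top.mpr hf]

namespace UniversalEnvelopingAlgebra

variable {R g : Type*} [CommRing R] [LieRing g] [LieAlgebra R g]

theorem adjoin_range_ι :
    Algebra.adjoin R (Set.range (ι R : g → UniversalEnvelopingAlgebra R g)) = ⊤ := by
  have hsurj : Function.Surjective (mkAlgHom R g) := RingCon.mkₐ_surjective _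
  rw [← (Algebra.map_top _).trans (AlgHom.range_eq_top _ |>.mpr hsurj),
    ← TensorAlgebra.adjoin_range_ι, AlgHom.map_adjoin, ← Set.range_comp]
  rfl

theorem adjoin_image_ι_eq_top {s : Set g} (hs : LieSubalgebra.lieSpan R g s = ⊤) :
    Algebra.adjoin R (ι R '' s) = ⊤ := by
  set B := Algebra.adjoin R (ι R '' s)
  have hg : LieSubalgebra.lieSpan R g s ≤ (lieSubalgebraOfSubalgebra R _ B).comap (ι R) :=
    LieSubalgebra.lieSpan_le.mpr fun x hx ↦ Algebra.subset_adjoin ⟨x, hx, rfl⟩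
  rw [eq_top_iff, ← adjoin_range_ι, Algebra.adjoin_le_iff]
  rintro _ ⟨x, rfl⟩
  exact hg (hs ▸ LieSubalgebra.mem_top x)

theorem sub_algebraMap_lift_zero_mem_span {s : Set g} (hs : LieSubalgebra.lieSpan R g s = ⊤)
    (u : UniversalEnvelopingAlgebra R g) :
    u - algebraMap R _ (lift R (0 : g →ₗ⁅R⁆ R) u) ∈ Ideal.span (ι R '' s) := by
  set ε := lift R (0 : g →ₗ⁅R⁆ R)
  have hu : u ∈ Algebra.adjoin R (ι R '' s) := adjoin_image_ι_eq_top hs ▸ Algebra.mem_top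
  induction hu using Algebra.adjoin_induction with
  | mem _ hx =>
    obtain ⟨x, hx, rfl⟩ := hx
    simpa [ε] using Ideal.subset_span (Set.mem_image_of_mem (ι R) hx)
  | algebraMap r => simp [ε]
  | add x y _ _ hx hy => simpa [map_add, add_sub_add_comm] using add_mem hx hy
  | mul x y _ _ hx hy =>
    have hxy : x * y - algebraMap R _ (ε (x * y)) =
        x * (y - algebraMap R _ (ε y)) + algebraMap R _ (ε y) * (x - algebraMap R _ (ε x)) := by
      rw [map_mul ε, mul_comm (ε x), map_mul (algebraMap R _), mul_sub, mul_sub,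
        Algebra.commutes (ε y) x]
      abel
    rw [hxy]
    exact add_mem (Ideal.mul_mem_left _ _ hy) (Ideal.mul_mem_left _ _ hx)

theorem ker_lift_zero_eq_span {s : Set g} (hs : LieSubalgebra.lieSpan R g s = ⊤) :
    RingHom.ker (lift R (0 : g →ₗ⁅R⁆ R)) = Ideal.span (ι R '' s) := by
  refine le_antisymm (fun u hu ↦ ?_) ?_
  · simpa [RingHom.mem_ker.mp hu] using sub_algebraMap_lift_zero_mem_span hs u
  · rw [Ideal.span_le]
    rintro _ ⟨x, -, rfl⟩
    simp

end UniversalEnvelopingAlgebra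

namespace HNN

local notation "F" => FreeLieAlgebra k (L ⊕ Unit)
local notation "I" => LieSubmodule.lieSpan k F (hnnRel k L A d)
local notation "U" => UniversalEnvelopingAlgebra k (HNN k L A d)
local notation "ε" => UniversalEnvelopingAlgebra.lift k (0 : HNN k L A d →ₗ⁅k⁆ k)

noncomputable def mk : F →ₗ⁅k⁆ HNN k L A d :=
  { (LieSubmodule.Quotient.mk' I : F →ₗ[k] F ⧸ I) with map_lie' := rfl }

lemma mk_surjective : Function.Surjective (mk k L A d) :=
  LieSubmodule.Quotient.surjective_mk' _

lemma mk_eq_zero_of_mem_hnnRel {y : F} (hy : y ∈ hnnRel k L A d) : mk k L A d y = 0 :=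
  (LieSubmodule.Quotient.mk_eq_zero' ..).mpr (LieSubmodule.subset_lieSpan hy)

lemma hnnOf_smul_add (c : k) (x y : L) :
    hnnOf k L A d (c • x + y) = c • hnnOf k L A d x + hnnOf k L A d y := by
  have := mk_eq_zero_of_mem_hnnRel k L A d (Or.inl (Or.inl ⟨c, x, y, rfl⟩))
  rwa [map_sub, map_sub, map_smul, sub_sub, sub_eq_zero] at this

noncomputable def ofHom : L →ₗ⁅k⁆ HNN k L A d where
  toFun := hnnOf k L A d
  map_add' x y := by simpa using hnnOf_smul_add k L A d 1 x y
  map_smul' c x := by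
    have hzero : hnnOf k L A d 0 = 0 := by simpa using hnnOf_smul_add k L A d 1 0 0
    simpa [hzero] using hnnOf_smul_add k L A d c x 0
  map_lie' {x y} := by
    have := mk_eq_zero_of_mem_hnnRel k L A d (Or.inl (Or.inr ⟨x, y, rfl⟩))
    rwa [map_sub, LieHom.map_lie, sub_eq_zero] at this

@[simp] lemma ofHom_apply (x : L) : ofHom k L A d x = hnnOf k L A d x := rfl

lemma lie_hnnT_hnnOf (a : A) : ⁅hnnT k L A d, hnnOf k L A d a⁆ = hnnOf k L A d (d a) := by
  have := mk_eq_zero_of_mem_hnnRel k L A d (Or.inr ⟨a, rfl⟩)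
  rwa [map_sub, LieHom.map_lie, sub_eq_zero] at this

lemma lieSpan_insert_hnnT_range_hnnOf :
    LieSubalgebra.lieSpan k (HNN k L A d) (insert (hnnT k L A d) (Set.range (hnnOf k L A d))) =
      ⊤ := by
  have := LieSubalgebra.lieSpan_image_eq_top (mk_surjective k L A d)
    (FreeLieAlgebra.lieSpan_range_of k (L ⊕ Unit))
  have hgen : mk k L A d ∘ of k = Sum.elim (hnnOf k L A d) fun _ ↦ hnnT k L A d := by
    ext (x | _) <;> rfl
  rwa [← Set.range_comp, hgen, Set.Sum.elim_range, Set.range_const, Set.union_comm,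
    ← Set.insert_eq] at this

lemma NL_eq_span_image : NL k L A d = Submodule.span U (ι k '' Set.range (hnnOf k L A d)) := by
  rw [NL, ← Set.range_comp]
  congr 1
  ext
  simp [eq_comm]

lemma NL_le_ker_lift_zero : NL k L A d ≤ RingHom.ker ε :=
  Submodule.span_le.mpr <| by
    rintro _ ⟨x, rfl⟩
    simp [-ι_apply, lift_ι_apply]

lemma ι_mul_ι_hnnT_mem_NL (a : A) :
    ι k (hnnOf k L A d a) * ι k (hnnT k L A d) ∈ NL k L A d := by
  have hcomm : ι k (hnnOf k L A d a) * ι k (hnnT k L A d) =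
      ι k (hnnT k L A d) * ι k (hnnOf k L A d a) - ι k (hnnOf k L A d (d a)) := by
    rw [← lie_hnnT_hnnOf, LieHom.map_lie, Ring.lie_def, sub_sub_cancel]
  rw [hcomm]
  exact sub_mem (Submodule.smul_mem _ _ (Submodule.subset_span ⟨a, rfl⟩))
    (Submodule.subset_span ⟨d a, rfl⟩)

section Lift

variable {k L A d} {E : Type*} [LieRing E] [LieAlgebra k E]
  (φ : L →ₗ⁅k⁆ E) (τ : E) (hτ : ∀ a : A, ⁅τ, φ a⁆ = φ (d a))

noncomputable def lift : HNN k L A d →ₗ⁅k⁆ E :=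
  let G := FreeLieAlgebra.lift k (Sum.elim φ fun _ ↦ τ)
  have hG : I ≤ G.ker := LieSubmodule.lieSpan_le.mpr <| by
    rintro _ ((⟨c, x, y, rfl⟩ | ⟨x, y, rfl⟩) | ⟨a, rfl⟩) <;>
      simp [G, hnnGen, hnnTGen, hτ]
  { Submodule.liftQ _ G.toLinearMap hG with
    map_lie' := by
      rintro ⟨x⟩ ⟨y⟩
      exact G.map_lie x y }

@[simp] lemma lift_hnnOf (x : L) : lift φ τ hτ (hnnOf k L A d x) = φ x :=
  FreeLieAlgebra.lift_of_apply ..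

@[simp] lemma lift_hnnT : lift φ τ hτ (hnnT k L A d) = τ :=
  FreeLieAlgebra.lift_of_apply ..

end Lift

section Representation

variable {k L A d} {M : Type*} [AddCommGroup M] [Module k M]
  [Module (UniversalEnvelopingAlgebra k (HNN k L A d)) M]
  [IsScalarTower k (UniversalEnvelopingAlgebra k (HNN k L A d)) M]

noncomputable def diagRep : U →ₐ[k] Module.End k (M × k) :=
  (LinearMap.prodMapAlgHom k M k).comp
    ((Algebra.lsmul k k M).prod ((Algebra.ofId k (Module.End k k)).comp ε))

@[simp] lemma diagRep_apply (u : U) (p : M × k) : diagRep u p = (u • p.1, ε u * p.2) := rfl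

noncomputable def prodRep (v : M) (hv : ∀ a : A, ι k (hnnOf k L A d a) • v = 0) :
    HNN k L A d →ₗ⁅k⁆ Module.End k (M × k) :=
  lift (diagRep.toLieHom.comp ((ι k).comp (ofHom k L A d)))
    (diagRep (ι k (hnnT k L A d)) + (LinearMap.snd k M k).smulRight (v, (0 : k))) fun a ↦ by
      have hJ : ⁅(LinearMap.snd k M k).smulRight (v, (0 : k)),
          diagRep (M := M) (ι k (hnnOf k L A d a))⁆ = 0 := by
        ext p <;> simp [Ring.lie_def, hv, lift_ι_apply, -ι_apply]
      simp only [LieHom.comp_apply, ofHom_apply, AlgHom.coe_toLieHom]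
      rw [add_lie, hJ, add_zero, ← AlgHom.coe_toLieHom, ← LieHom.map_lie, ← LieHom.map_lie,
        lie_hnnT_hnnOf]

section

variable (v : M) (hv : ∀ a : A, ι k (hnnOf k L A d a) • v = 0)

lemma lift_prodRep_apply_inl (u : U) (m : M) :
    UniversalEnvelopingAlgebra.lift k (prodRep v hv) u (m, 0) = (u • m, 0) := by
  have hu : u ∈ Algebra.adjoin k (ι k '' insert (hnnT k L A d) (Set.range (hnnOf k L A d))) :=
    UniversalEnvelopingAlgebra.adjoin_image_ι_eq_top (lieSpan_insert_hnnT_range_hnnOf k L A d) ▸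
      Algebra.mem_top
  induction hu using Algebra.adjoin_induction generalizing m with
  | mem _ hx => obtain ⟨_, rfl | ⟨x, rfl⟩, rfl⟩ := hx <;> simp [prodRep, lift_ι_apply, -ι_apply]
  | algebraMap r => simp [Algebra.algebraMap_eq_smul_one, smul_assoc]
  | add x y _ _ hx hy => simp [hx, hy, add_smul]
  | mul x y _ _ hx hy => simp [hx, hy, mul_smul]

lemma lift_prodRep_apply_hnnT :
    UniversalEnvelopingAlgebra.lift k (prodRep v hv) (ι k (hnnT k L A d)) (0, 1) = (v, 0) := by
  simp [prodRep, lift_ι_apply, -ι_apply]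

lemma lift_prodRep_apply_of_mem_NL {n : U} (hn : n ∈ NL k L A d) :
    UniversalEnvelopingAlgebra.lift k (prodRep v hv) n (0, 1) = 0 := by
  induction hn using Submodule.span_induction with
  | mem _ hx =>
    obtain ⟨x, rfl⟩ := hx
    simp [prodRep, lift_ι_apply, -ι_apply]
  | zero => simp
  | add x y _ _ hx hy => simp [hx, hy]
  | smul r x _ hx => simp [hx]

end

theorem smul_eq_zero_of_mul_hnnT_mem_NL (v : M) (hv : ∀ a : A, ι k (hnnOf k L A d a) • v = 0)
    {u : U} (hu : u * ι k (hnnT k L A d) ∈ NL k L A d) : u • v = 0 := by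
  have := lift_prodRep_apply_of_mem_NL v hv hu
  rw [map_mul, Module.End.mul_apply, lift_prodRep_apply_hnnT, lift_prodRep_apply_inl] at this
  exact congrArg Prod.fst this

end Representation

noncomputable def mulHnnT : (U ⧸ NA k L A d) →ₗ[U] (U ⧸ NL k L A d) :=
  (NA k L A d).liftQ ((NL k L A d).mkQ ∘ₗ LinearMap.toSpanSingleton U U (ι k (hnnT k L A d))) <|
    Submodule.span_le.mpr <| by
      rintro _ ⟨a, rfl⟩
      exact (Submodule.Quotient.mk_eq_zero _).mpr (ι_mul_ι_hnnT_mem_NL k L A d a)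

lemma mulHnnT_mk (u : U) :
    mulHnnT k L A d (Submodule.Quotient.mk u) = Submodule.Quotient.mk (u * ι k (hnnT k L A d)) :=
  rfl

noncomputable def augmentationNL : (U ⧸ NL k L A d) →ₗ[k] k :=
  ((NL k L A d).restrictScalars k).liftQ (AlgHom.toLinearMap ε)
      (fun _ hn ↦ NL_le_ker_lift_zero k L A d hn) ∘ₗ
    (Submodule.Quotient.restrictScalarsEquiv k (NL k L A d)).symm.toLinearMap

lemma augmentationNL_mk (u : U) : augmentationNL k L A d (Submodule.Quotient.mk u) = ε u :=
  rfl

lemma mulHnnT_injective : Function.Injective (mulHnnT k L A d) := by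
  refine (injective_iff_map_eq_zero _).mpr fun m hm ↦ ?_
  obtain ⟨u, rfl⟩ := Submodule.Quotient.mk_surjective _ m
  rw [mulHnnT_mk, Submodule.Quotient.mk_eq_zero] at hm
  have hv (a : A) : ι k (hnnOf k L A d a) • (Submodule.Quotient.mk 1 : U ⧸ NA k L A d) = 0 := by
    rw [← Submodule.Quotient.mk_smul, smul_eq_mul, mul_one, Submodule.Quotient.mk_eq_zero]
    exact Submodule.subset_span ⟨a, rfl⟩
  simpa [← Submodule.Quotient.mk_smul] using smul_eq_zero_of_mul_hnnT_mem_NL _ hv hm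

lemma augmentationNL_eq_zero_iff (m : U ⧸ NL k L A d) :
    augmentationNL k L A d m = 0 ↔ ∃ n, mulHnnT k L A d n = m := by
  obtain ⟨u, rfl⟩ := Submodule.Quotient.mk_surjective _ m
  constructor
  · intro hu
    rw [augmentationNL_mk, ← RingHom.mem_ker, UniversalEnvelopingAlgebra.ker_lift_zero_eq_span
      (lieSpan_insert_hnnT_range_hnnOf k L A d), Set.image_insert_eq, Ideal.span,
      Submodule.span_insert, ← NL_eq_span_image, Submodule.mem_sup] at hu
    obtain ⟨_, hs, n, hn, rfl⟩ := hu
    obtain ⟨v, rfl⟩ := Submodule.mem_span_singleton.mp hs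
    refine ⟨Submodule.Quotient.mk v, ?_⟩
    rw [mulHnnT_mk, Submodule.Quotient.eq, smul_eq_mul, sub_add_cancel_left]
    exact neg_mem hn
  · rintro ⟨n, hn⟩
    obtain ⟨v, rfl⟩ := Submodule.Quotient.mk_surjective _ n
    rw [← hn]
    simp [mulHnnT_mk, augmentationNL_mk, lift_ι_apply, -ι_apply]

lemma augmentationNL_surjective : Function.Surjective (augmentationNL k L A d) :=
  fun c ↦ ⟨Submodule.Quotient.mk (algebraMap k _ c), by simp [augmentationNL_mk]⟩

end HNN

theorem hnn_shortExactSequence :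
    ∃ (α : (UniversalEnvelopingAlgebra k (HNN k L A d) ⧸ NA k L A d)
          →ₗ[UniversalEnvelopingAlgebra k (HNN k L A d)]
          (UniversalEnvelopingAlgebra k (HNN k L A d) ⧸ NL k L A d))
      (β : (UniversalEnvelopingAlgebra k (HNN k L A d) ⧸ NL k L A d) →+ k),
      (∀ u : UniversalEnvelopingAlgebra k (HNN k L A d),
        α (Submodule.Quotient.mk u) = Submodule.Quotient.mk (u * ι k (hnnT k L A d))) ∧
      (∀ u : UniversalEnvelopingAlgebra k (HNN k L A d),
        β (Submodule.Quotient.mk u) =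
          (UniversalEnvelopingAlgebra.lift k (0 : HNN k L A d →ₗ⁅k⁆ k)) u) ∧
      Function.Injective α ∧
      (∀ m, β m = 0 ↔ ∃ n, α n = m) ∧
      Function.Surjective β :=
  ⟨HNN.mulHnnT k L A d, (HNN.augmentationNL k L A d).toAddMonoidHom, HNN.mulHnnT_mk k L A d,
    HNN.augmentationNL_mk k L A d, HNN.mulHnnT_injective k L A d,
    HNN.augmentationNL_eq_zero_iff k L A d, HNN.augmentationNL_surjective k L A d⟩
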